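/- Let 2 < q < ∞ and let u₀ : ℝ³ → ℝ³ be measurable with ‖u₀‖_{E²_q} < ∞. Then lim_{R→∞} R^{6/q − 2} N⁰_{q,R}(u₀) = 0, where N⁰_{q,R}(u₀) := R⁻¹ (∑_{k∈ℤ³} (∫_{B_R(Rk)} |u₀|² dx)^{q/2})^{2/q}. -/

import Mathlib

open MeasureTheory Filter Metric Set
open scoped ENNReal NNReal Topology Real BigOperators

noncomputable section

abbrev E3 : Type := EuclideanSpace ℝ (Fin 3)

/-- A lattice point of `ℤ³` viewed as a point of `ℝ³`. -/
def zc (k : Fin 3 → ℤ) : E3 := WithLp.toLp 2 (fun i => (k i : ℝ))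

/-- The `E²_q` (Wiener amalgam) norm. -/
def e2qNorm (q : ℝ) (f : E3 → E3) : ℝ≥0∞ :=
  (∑' k : Fin 3 → ℤ, (∫⁻ x in ball (zc k) 1, (‖f x‖₊ : ℝ≥0∞) ^ 2) ^ (q/2)) ^ (1/q)

/-- `A_{0,q}(R) = ‖(∫_{B_R(Rk)} |u₀|²)_k‖_{ℓ^{q/2}}`. -/
def A0q (q R : ℝ) (u₀ : E3 → E3) : ℝ≥0∞ :=
  (∑' k : Fin 3 → ℤ, (∫⁻ x in ball (R • zc k) R, (‖u₀ x‖₊ : ℝ≥0∞) ^ 2) ^ (q/2)) ^ (2/q)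

/-- `N⁰_R(u₀) = sup_{x₀} R⁻¹ ∫_{B_R(x₀)} |u₀|²`. -/
def N0R (u₀ : E3 → E3) (R : ℝ) : ℝ≥0∞ :=
  ⨆ x₀ : E3, (ENNReal.ofReal R)⁻¹ * ∫⁻ x in ball x₀ R, (‖u₀ x‖₊ : ℝ≥0∞) ^ 2

/-- `N⁰_{q,R}(u₀) = R⁻¹ A_{0,q}(R)`. -/
def N0q (q R : ℝ) (u₀ : E3 → E3) : ℝ≥0∞ := (ENNReal.ofReal R)⁻¹ * A0q q R u₀

lemma dist_coord_le (x y : E3) (i : Fin 3) : dist (x i) (y i) ≤ dist x y := by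
  rw [EuclideanSpace.dist_eq]
  have h : dist (x i) (y i) ^ 2 ≤ ∑ j, dist (x j) (y j) ^ 2 :=
    Finset.single_le_sum (f := fun j => dist (x j) (y j) ^ 2) (fun j _ => sq_nonneg _)
      (Finset.mem_univ i)
  calc dist (x i) (y i) = Real.sqrt (dist (x i) (y i) ^ 2) := (Real.sqrt_sq dist_nonneg).symm
    _ ≤ _ := Real.sqrt_le_sqrt h

lemma exists_lattice_near (x : E3) : ∃ m : Fin 3 → ℤ, dist x (zc m) < 1 := by
  refine ⟨fun i => round (x i), ?_⟩
  rw [EuclideanSpace.dist_eq]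
  have h : ∀ i : Fin 3, dist (x i) (zc (fun j => round (x j)) i) ^ 2 ≤ (1/2 : ℝ)^2 := by
    intro i
    have h1 : |x i - round (x i)| ≤ 1/2 := abs_sub_round (x i)
    have h2 : dist (x i) (zc (fun j => round (x j)) i) = |x i - round (x i)| := by
      simp [zc, Real.dist_eq]
    rw [h2]
    have : (0:ℝ) ≤ |x i - round (x i)| := abs_nonneg _
    nlinarith
  have hsum : ∑ i, dist (x i) (zc (fun j => round (x j)) i) ^ 2 ≤ 3/4 := by
    calc ∑ i, dist (x i) (zc (fun j => round (x j)) i) ^ 2 ≤ ∑ _i : Fin 3, (1/2:ℝ)^2 :=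
          Finset.sum_le_sum (fun i _ => h i)
      _ = 3/4 := by norm_num
  calc Real.sqrt (∑ i, dist (x i) (zc (fun j => round (x j)) i) ^ 2)
      ≤ Real.sqrt (3/4) := Real.sqrt_le_sqrt hsum
    _ < Real.sqrt 1 := Real.sqrt_lt_sqrt (by norm_num) (by norm_num)
    _ = 1 := Real.sqrt_one

def boxF (c : E3) (r : ℝ) : Finset (Fin 3 → ℤ) :=
  Fintype.piFinset fun i => Finset.Icc ⌈c i - r⌉ ⌊c i + r⌋

lemma mem_boxF {c : E3} {r : ℝ} {m : Fin 3 → ℤ} (h : ∀ i, |(m i : ℝ) - c i| ≤ r) :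
    m ∈ boxF c r := by
  rw [boxF, Fintype.mem_piFinset]
  intro i
  obtain ⟨h1, h2⟩ := abs_le.1 (h i)
  rw [Finset.mem_Icc]
  exact ⟨Int.ceil_le.2 (by linarith), Int.le_floor.2 (by linarith)⟩

lemma mem_boxF_of_dist {c : E3} {r : ℝ} {m : Fin 3 → ℤ} (h : dist (zc m) c ≤ r) :
    m ∈ boxF c r := by
  refine mem_boxF fun i => ?_
  have := (dist_coord_le (zc m) c i).trans h
  simpa [zc, Real.dist_eq] using this

lemma card_boxF_le {c : E3} {r : ℝ} (hr : 0 ≤ r) :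
    ((boxF c r).card : ℝ≥0∞) ≤ ENNReal.ofReal ((2*r+1)^3) := by
  have key : ((boxF c r).card : ℝ) ≤ (2*r+1)^3 := by
    rw [boxF, Fintype.card_piFinset]
    push_cast
    have hone : ∀ i : Fin 3, ((Finset.Icc ⌈c i - r⌉ ⌊c i + r⌋).card : ℝ) ≤ 2*r+1 := by
      intro i
      rw [Int.card_Icc]
      rcases le_or_gt (⌊c i + r⌋ + 1 - ⌈c i - r⌉) 0 with h | h
      · rw [Int.toNat_of_nonpos h]; push_cast; linarith
      · have hcast : (((⌊c i + r⌋ + 1 - ⌈c i - r⌉).toNat : ℤ) : ℝ) ≤ 2*r+1 := by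
          rw [Int.toNat_of_nonneg h.le]
          push_cast
          have h1 := Int.floor_le (c i + r)
          have h2 := Int.le_ceil (c i - r)
          linarith
        exact_mod_cast hcast
    calc (∏ i : Fin 3, ((Finset.Icc ⌈c i - r⌉ ⌊c i + r⌋).card : ℝ))
        ≤ ∏ _i : Fin 3, (2*r+1) := Finset.prod_le_prod (fun i _ => by positivity) (fun i _ => hone i)
      _ = (2*r+1)^3 := by rw [Finset.prod_const]; norm_num
  calc ((boxF c r).card : ℝ≥0∞) = ENNReal.ofReal ((boxF c r).card : ℝ) := by
        rw [ENNReal.ofReal_natCast]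
    _ ≤ _ := ENNReal.ofReal_le_ofReal key

lemma holder_finset {ι : Type*} (p : ℝ) (hp : 1 ≤ p) (s : Finset ι) (f : ι → ℝ≥0∞) :
    (∑ i ∈ s, f i) ^ p ≤ (s.card : ℝ≥0∞) ^ (p - 1) * ∑ i ∈ s, f i ^ p := by
  rcases s.eq_empty_or_nonempty with rfl | hs
  · simp [ENNReal.zero_rpow_of_pos (by linarith : (0:ℝ) < p)]
  have hcard : (s.card : ℝ≥0∞) ≠ 0 := by
    simpa using hs.card_pos.ne'
  have hcardt : (s.card : ℝ≥0∞) ≠ ⊤ := ENNReal.natCast_ne_top _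
  have hw : ∑ _i ∈ s, (s.card : ℝ≥0∞)⁻¹ = 1 := by
    rw [Finset.sum_const, nsmul_eq_mul, ENNReal.mul_inv_cancel hcard hcardt]
  have h := ENNReal.rpow_arith_mean_le_arith_mean_rpow s (fun _ => (s.card : ℝ≥0∞)⁻¹) f hw hp
  rw [← Finset.mul_sum, ← Finset.mul_sum, ENNReal.mul_rpow_of_nonneg _ _ (by linarith)] at h
  calc (∑ i ∈ s, f i)^p
      = (s.card:ℝ≥0∞)^p * ((s.card:ℝ≥0∞)⁻¹^p * (∑ i ∈ s, f i)^p) := by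
        rw [← mul_assoc, ← ENNReal.mul_rpow_of_nonneg _ _ (by linarith),
          ENNReal.mul_inv_cancel hcard hcardt, ENNReal.one_rpow, one_mul]
    _ ≤ (s.card:ℝ≥0∞)^p * ((s.card:ℝ≥0∞)⁻¹ * ∑ i ∈ s, f i ^ p) := by
        exact mul_le_mul_right h _
    _ = (s.card:ℝ≥0∞)^(p-1) * ∑ i ∈ s, f i ^ p := by
        rw [← mul_assoc]
        congr 1
        rw [← ENNReal.rpow_neg_one (s.card:ℝ≥0∞), ← ENNReal.rpow_add _ _ hcard hcardt]
        ring_nf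

lemma indicator_rpow {ι : Type*} (s : Set ι) (f : ι → ℝ≥0∞) (p : ℝ) (hp : 0 < p) (m : ι) :
    (s.indicator f m) ^ p = s.indicator (fun m => f m ^ p) m := by
  by_cases h : m ∈ s
  · simp [Set.indicator_of_mem h]
  · simp [Set.indicator_of_notMem h, ENNReal.zero_rpow_of_pos hp]

lemma tsum_indicator_le_card {ι : Type*} (s : Set ι) (G : Finset ι) (hsub : s ⊆ ↑G) (c : ℝ≥0∞) :
    ∑' i, s.indicator (fun _ => c) i ≤ G.card * c := by
  have h1 : ∀ i, s.indicator (fun _ => c) i ≤ (↑G : Set ι).indicator (fun _ => c) i := fun i =>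
    Set.indicator_le_indicator_of_subset hsub (fun _ => zero_le) i
  calc ∑' i, s.indicator (fun _ => c) i ≤ ∑' i, (↑G : Set ι).indicator (fun _ => c) i :=
        ENNReal.tsum_le_tsum h1
    _ = ∑ i ∈ G, (↑G : Set ι).indicator (fun _ => c) i :=
        tsum_eq_sum (fun i hi => Set.indicator_of_notMem (by simpa using hi) _)
    _ = ∑ _i ∈ G, c := Finset.sum_congr rfl (fun i hi => Set.indicator_of_mem (by simpa using hi) _)
    _ = G.card * c := by rw [Finset.sum_const, nsmul_eq_mul]

def Tset (R : ℝ) (k : Fin 3 → ℤ) : Set (Fin 3 → ℤ) := {m | dist (zc m) (R • zc k) < R + 1}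

lemma lint_ball_le (u₀ : E3 → E3) {R : ℝ} (k : Fin 3 → ℤ) :
    (∫⁻ x in ball (R • zc k) R, (‖u₀ x‖₊ : ℝ≥0∞) ^ 2)
      ≤ ∑' m, (Tset R k).indicator
          (fun m => ∫⁻ x in ball (zc m) 1, (‖u₀ x‖₊ : ℝ≥0∞) ^ 2) m := by
  have cover : ball (R • zc k) R ⊆ ⋃ m : Tset R k, ball (zc m.1) 1 := by
    intro x hx
    obtain ⟨m, hm⟩ := exists_lattice_near x
    have hmem : m ∈ Tset R k := by
      have hd : dist (zc m) (R • zc k) < 1 + R :=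
        calc dist (zc m) (R • zc k) ≤ dist (zc m) x + dist x (R • zc k) := dist_triangle _ _ _
          _ < 1 + R := add_lt_add (by rwa [dist_comm]) (mem_ball.mp hx)
      simpa [Tset, add_comm] using hd
    exact Set.mem_iUnion.2 ⟨⟨m, hmem⟩, by simpa [mem_ball, dist_comm] using hm⟩
  calc (∫⁻ x in ball (R • zc k) R, (‖u₀ x‖₊ : ℝ≥0∞) ^ 2)
      ≤ ∫⁻ x in ⋃ m : Tset R k, ball (zc m.1) 1, (‖u₀ x‖₊ : ℝ≥0∞) ^ 2 :=
        lintegral_mono_set cover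
    _ ≤ ∑' m : Tset R k, ∫⁻ x in ball (zc m.1) 1, (‖u₀ x‖₊ : ℝ≥0∞) ^ 2 :=
        lintegral_iUnion_le _ _
    _ = _ := tsum_subtype (Tset R k)
          (fun m => ∫⁻ x in ball (zc m) 1, (‖u₀ x‖₊ : ℝ≥0∞) ^ 2)

lemma Tset_subset_boxF {R : ℝ} (hR : 0 ≤ R) (k : Fin 3 → ℤ) :
    Tset R k ⊆ ↑(boxF (R • zc k) (R+1)) := fun m hm =>
  mem_boxF_of_dist (le_of_lt hm)

lemma count_le {R : ℝ} (hR : 1 ≤ R) (m : Fin 3 → ℤ) :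
    ∑' k : Fin 3 → ℤ, ({k | m ∈ Tset R k}).indicator (fun _ => (1:ℝ≥0∞)) k ≤ 125 := by
  have hR0 : (0:ℝ) < R := lt_of_lt_of_le zero_lt_one hR
  have hsub : {k | m ∈ Tset R k} ⊆ ↑(boxF (R⁻¹ • zc m) 2) := by
    intro k hk
    refine mem_boxF fun i => ?_
    have h1 : dist ((zc m) i) ((R • zc k) i) ≤ dist (zc m) (R • zc k) := dist_coord_le _ _ _
    have h2 : dist (zc m) (R • zc k) < R + 1 := hk
    have h3 : |(m i : ℝ) - R * (k i : ℝ)| ≤ R + 1 := by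
      have he : ((R • zc k) i) = R * (k i : ℝ) := by simp [zc]
      rw [Real.dist_eq, he] at h1
      have h1' : |(m i : ℝ) - R * (k i : ℝ)| ≤ dist (zc m) (R • zc k) := h1
      linarith
    have he2 : ((R⁻¹ • zc m) i) = R⁻¹ * (m i : ℝ) := by simp [zc]
    rw [he2]
    have inner : ((k i:ℝ) - R⁻¹ * (m i : ℝ)) * R = R * (k i : ℝ) - (m i : ℝ) := by
      field_simp
    have key : |(k i:ℝ) - R⁻¹ * (m i : ℝ)| * R = |R * (k i : ℝ) - (m i:ℝ)| := by
      calc |(k i:ℝ) - R⁻¹ * (m i : ℝ)| * R = |(k i:ℝ) - R⁻¹ * (m i : ℝ)| * |R| := by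
            rw [abs_of_pos hR0]
        _ = |((k i:ℝ) - R⁻¹ * (m i : ℝ)) * R| := (abs_mul _ _).symm
        _ = |R * (k i : ℝ) - (m i:ℝ)| := by rw [inner]
    have h4 : |R * (k i : ℝ) - (m i:ℝ)| ≤ R + 1 := by rwa [abs_sub_comm] at h3
    have h5 := abs_nonneg ((k i:ℝ) - R⁻¹ * (m i : ℝ))
    nlinarith
  calc ∑' k : Fin 3 → ℤ, ({k | m ∈ Tset R k}).indicator (fun _ => (1:ℝ≥0∞)) k
      ≤ (boxF (R⁻¹ • zc m) 2).card * 1 := tsum_indicator_le_card _ _ hsub 1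
    _ ≤ 125 := by
        rw [mul_one]
        refine le_trans (card_boxF_le (by norm_num)) ?_
        rw [show ((2*(2:ℝ)+1)^3 : ℝ) = (125:ℝ) by norm_num]
        simp [ENNReal.ofReal_ofNat]

lemma tail_bound (b : (Fin 3 → ℤ) → ℝ≥0∞) {p R : ℝ} (hp : 1 ≤ p) (hR : 1 ≤ R)
    (F : Finset (Fin 3 → ℤ)) :
    ∑' k : Fin 3 → ℤ, (∑' m, ((Tset R k) \ ↑F).indicator b m) ^ p
      ≤ ENNReal.ofReal ((2*(R+1)+1)^3) ^ (p-1) *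
          (125 * ∑' m, ((↑F : Set (Fin 3 → ℤ))ᶜ).indicator (fun m => b m ^ p) m) := by
  have hp0 : (0:ℝ) < p := lt_of_lt_of_le zero_lt_one hp
  set E : ℝ≥0∞ := ENNReal.ofReal ((2*(R+1)+1)^3) ^ (p-1) with hE
  have step1 : ∀ k, (∑' m, ((Tset R k) \ ↑F).indicator b m) ^ p
      ≤ E * ∑' m, ((Tset R k) \ ↑F).indicator (fun m => b m ^ p) m := by
    intro k
    set G := boxF (R • zc k) (R+1) with hG
    have hsub : ((Tset R k) \ ↑F) ⊆ ↑G := fun m hm =>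
      Tset_subset_boxF (le_trans zero_le_one hR) k hm.1
    have hzero : ∀ m ∉ G, ((Tset R k) \ ↑F).indicator b m = 0 := fun m hm =>
      Set.indicator_of_notMem (fun hmem => hm (hsub hmem)) _
    have hzero' : ∀ m ∉ G, ((Tset R k) \ ↑F).indicator (fun m => b m ^ p) m = 0 := fun m hm =>
      Set.indicator_of_notMem (fun hmem => hm (hsub hmem)) _
    calc (∑' m, ((Tset R k) \ ↑F).indicator b m) ^ p
        = (∑ m ∈ G, ((Tset R k) \ ↑F).indicator b m) ^ p := by rw [tsum_eq_sum hzero]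
      _ ≤ (G.card : ℝ≥0∞)^(p-1) * ∑ m ∈ G, (((Tset R k) \ ↑F).indicator b m) ^ p :=
          holder_finset p hp G _
      _ = (G.card : ℝ≥0∞)^(p-1) * ∑ m ∈ G, ((Tset R k) \ ↑F).indicator (fun m => b m ^ p) m := by
          congr 1; exact Finset.sum_congr rfl fun m _ => indicator_rpow _ _ _ hp0 m
      _ = (G.card : ℝ≥0∞)^(p-1) * ∑' m, ((Tset R k) \ ↑F).indicator (fun m => b m ^ p) m := by
          rw [tsum_eq_sum hzero']
      _ ≤ E * ∑' m, ((Tset R k) \ ↑F).indicator (fun m => b m ^ p) m := by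
          refine mul_le_mul_left (ENNReal.rpow_le_rpow ?_ (by linarith)) _
          exact card_boxF_le (by linarith)
  have hpt : ∀ m k, ((Tset R k) \ ↑F).indicator (fun m => b m ^ p) m
      = ((↑F : Set (Fin 3 → ℤ))ᶜ).indicator (fun m => b m ^ p) m *
          ({k | m ∈ Tset R k}).indicator (fun _ => (1:ℝ≥0∞)) k := by
    intro m k
    by_cases hF : m ∈ F <;> by_cases hT : m ∈ Tset R k <;>
      simp [Set.indicator_apply, hF, hT]
  calc ∑' k : Fin 3 → ℤ, (∑' m, ((Tset R k) \ ↑F).indicator b m) ^ p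
      ≤ ∑' k, E * ∑' m, ((Tset R k) \ ↑F).indicator (fun m => b m ^ p) m :=
        ENNReal.tsum_le_tsum step1
    _ = E * ∑' k, ∑' m, ((Tset R k) \ ↑F).indicator (fun m => b m ^ p) m :=
        ENNReal.tsum_mul_left
    _ = E * ∑' m, ∑' k, ((Tset R k) \ ↑F).indicator (fun m => b m ^ p) m := by
        rw [ENNReal.tsum_comm]
    _ ≤ E * (125 * ∑' m, ((↑F : Set (Fin 3 → ℤ))ᶜ).indicator (fun m => b m ^ p) m) := by
        refine mul_le_mul_right ?_ E
        calc ∑' m, ∑' k, ((Tset R k) \ ↑F).indicator (fun m => b m ^ p) m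
            = ∑' m, (((↑F : Set (Fin 3 → ℤ))ᶜ).indicator (fun m => b m ^ p) m *
                ∑' k, ({k | m ∈ Tset R k}).indicator (fun _ => (1:ℝ≥0∞)) k) := by
              refine tsum_congr fun m => ?_
              rw [← ENNReal.tsum_mul_left]
              exact tsum_congr fun k => hpt m k
          _ ≤ ∑' m, (((↑F : Set (Fin 3 → ℤ))ᶜ).indicator (fun m => b m ^ p) m * 125) :=
              ENNReal.tsum_le_tsum fun m => mul_le_mul_right (count_le hR m) _
          _ = 125 * ∑' m, ((↑F : Set (Fin 3 → ℤ))ᶜ).indicator (fun m => b m ^ p) m := by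
              rw [ENNReal.tsum_mul_right, mul_comm]

lemma main_bound (b : (Fin 3 → ℤ) → ℝ≥0∞) {p R : ℝ} (hp : 1 ≤ p)
    (F : Finset (Fin 3 → ℤ)) (M : ℝ) (hM : ∀ m ∈ F, ∀ i, |(m i : ℝ)| ≤ M)
    (hR1 : 1 ≤ R) (hRM : M + 1 ≤ R) :
    ∑' k : Fin 3 → ℤ, (∑' m, ((Tset R k) ∩ ↑F).indicator b m) ^ p
      ≤ 125 * (∑ m ∈ F, b m) ^ p := by
  have hp0 : (0:ℝ) < p := lt_of_lt_of_le zero_lt_one hp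
  have hR0 : (0:ℝ) < R := lt_of_lt_of_le zero_lt_one hR1
  set B := ∑ m ∈ F, b m with hB
  have hX : ∀ k, (∑' m, ((Tset R k) ∩ ↑F).indicator b m)
      ≤ (↑(boxF (0:E3) 2) : Set (Fin 3 → ℤ)).indicator (fun _ => B) k := by
    intro k
    by_cases hk : k ∈ (↑(boxF (0:E3) 2) : Set (Fin 3 → ℤ))
    · rw [Set.indicator_of_mem hk]
      calc ∑' m, ((Tset R k) ∩ ↑F).indicator b m ≤ ∑' m, (↑F : Set (Fin 3 → ℤ)).indicator b m :=
            ENNReal.tsum_le_tsum fun m => Set.indicator_le_indicator_of_subset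
              Set.inter_subset_right (fun _ => zero_le) m
        _ = ∑ m ∈ F, b m := by
            rw [tsum_eq_sum (fun m hm => Set.indicator_of_notMem (by simpa using hm) _)]
            exact Finset.sum_congr rfl fun m hm => Set.indicator_of_mem (by simpa using hm) _
    · rw [Set.indicator_of_notMem hk]
      have hempty : ∀ m, ((Tset R k) ∩ ↑F).indicator b m = 0 := by
        intro m
        refine Set.indicator_of_notMem (fun hmem => hk ?_) _
        obtain ⟨hT, hF⟩ := hmem
        refine mem_boxF fun i => ?_
        have h1' : dist ((zc m) i) ((R • zc k) i) < R + 1 :=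
          (dist_coord_le (zc m) (R • zc k) i).trans_lt hT
        have h1 : |(m i:ℝ) - R * (k i : ℝ)| < R + 1 := h1'
        have h2 : |(m i : ℝ)| ≤ M := hM m hF i
        have h3 : ((0:E3) i) = 0 := rfl
        rw [h3, sub_zero]
        have h4 : R * |(k i:ℝ)| = |R * (k i:ℝ)| := by rw [abs_mul, abs_of_pos hR0]
        have h5 : |R * (k i:ℝ)| - |(m i:ℝ)| ≤ |R * (k i:ℝ) - (m i:ℝ)| :=
          abs_sub_abs_le_abs_sub _ _
        have h6 : |R * (k i:ℝ) - (m i:ℝ)| < R + 1 := by rwa [abs_sub_comm] at h1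
        nlinarith [abs_nonneg ((k i:ℝ))]
      simp only [hempty, tsum_zero]
      exact le_refl 0
  calc ∑' k : Fin 3 → ℤ, (∑' m, ((Tset R k) ∩ ↑F).indicator b m) ^ p
      ≤ ∑' k, ((↑(boxF (0:E3) 2) : Set (Fin 3 → ℤ)).indicator (fun _ => B) k)^p :=
        ENNReal.tsum_le_tsum fun k => ENNReal.rpow_le_rpow (hX k) hp0.le
    _ = ∑' k, (↑(boxF (0:E3) 2) : Set (Fin 3 → ℤ)).indicator (fun _ => B^p) k :=
        tsum_congr fun k => indicator_rpow _ _ _ hp0 k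
    _ ≤ (boxF (0:E3) 2).card * B^p := tsum_indicator_le_card _ _ (subset_refl _) _
    _ ≤ 125 * B^p := by
        refine mul_le_mul_left ?_ _
        refine le_trans (card_boxF_le (by norm_num)) ?_
        rw [show ((2*(2:ℝ)+1)^3 : ℝ) = (125:ℝ) by norm_num]
        simp [ENNReal.ofReal_ofNat]

/-- Lemma 2.2, first part: if `2 < q < ∞` and `u₀ ∈ E²_q`, then
`R^{6/q−2} N⁰_{q,R}(u₀) → 0` as `R → ∞`. -/
theorem rpow_mul_N0q_tendsto_zero (q : ℝ) (hq : 2 < q)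
    (u₀ : E3 → E3) (hmeas : Measurable u₀) (hfin : e2qNorm q u₀ < ⊤) :
    Tendsto (fun R : ℝ => ENNReal.ofReal (R ^ (6/q - 2)) * N0q q R u₀)
      atTop (nhds 0) := by
  have hq0 : (0:ℝ) < q := by linarith
  -- the tsum of local energies to the power q/2 is finite
  have hS : (∑' m : Fin 3 → ℤ,
      (∫⁻ x in ball (zc m) 1, (‖u₀ x‖₊ : ℝ≥0∞) ^ 2) ^ (q/2)) ≠ ⊤ := by
    intro h
    simp only [e2qNorm] at hfin
    rw [h, ENNReal.top_rpow_of_pos (by positivity)] at hfin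
    exact lt_irrefl ⊤ hfin
  set p : ℝ := q/2 with hp_def
  have hp1 : 1 < p := by rw [hp_def]; linarith
  have hp0 : (0:ℝ) < p := by linarith
  have h1p_pos : (0:ℝ) < 1/p := by positivity
  have h1p_le : (1:ℝ)/p ≤ 1 := by rw [div_le_one hp0]; linarith
  set b : (Fin 3 → ℤ) → ℝ≥0∞ :=
    fun m => ∫⁻ x in ball (zc m) 1, (‖u₀ x‖₊ : ℝ≥0∞) ^ 2 with hb_def
  have hbm : ∀ m, b m ≠ ⊤ := by
    intro m htop
    have h1 : b m ^ p ≤ ∑' m, b m ^ p := ENNReal.le_tsum m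
    rw [htop, ENNReal.top_rpow_of_pos hp0] at h1
    exact hS (top_le_iff.mp h1)
  rw [ENNReal.tendsto_nhds_zero]
  intro ε hε
  -- choose the tail cutoff
  set C : ℝ≥0∞ := 125 * (2 * (125:ℝ≥0∞)^(1/p)) with hC_def
  have hCt : C ≠ ⊤ := by
    rw [hC_def]
    exact ENNReal.mul_ne_top (by norm_num)
      (ENNReal.mul_ne_top (by norm_num) (ENNReal.rpow_ne_top_of_nonneg h1p_pos.le (by norm_num)))
  set δ0 : ℝ≥0∞ := (ε/2)/C ⊓ 1 with hδ0_def
  have hδ0pos : 0 < δ0 := by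
    refine lt_min ?_ zero_lt_one
    exact ENNReal.div_pos (ENNReal.half_pos hε.ne').ne' hCt
  have hδ0t : δ0 ≠ ⊤ := ((min_le_right _ _).trans_lt (by norm_num)).ne
  have hδpos : 0 < δ0 ^ p := ENNReal.rpow_pos hδ0pos hδ0t
  obtain ⟨F, hF⟩ := ((ENNReal.tendsto_tsum_compl_atTop_zero
    (f := fun m => b m ^ p) hS).eventually_lt_const hδpos).exists
  set τ : ℝ≥0∞ := ∑' m, ((↑F : Set (Fin 3 → ℤ))ᶜ).indicator (fun m => b m ^ p) m with hτ_def
  have hτδ : τ ≤ δ0 ^ p := by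
    rw [hτ_def, ← tsum_subtype ((↑F : Set (Fin 3 → ℤ))ᶜ) (fun m => b m ^ p)]
    exact le_of_lt hF
  set M : ℝ := ∑ m ∈ F, ∑ i, |(m i : ℝ)| with hM_def
  have hM : ∀ m ∈ F, ∀ i, |(m i : ℝ)| ≤ M := by
    intro m hm i
    calc |(m i:ℝ)| ≤ ∑ j, |(m j:ℝ)| :=
          Finset.single_le_sum (f := fun j => |(m j : ℝ)|) (fun j _ => abs_nonneg _)
            (Finset.mem_univ i)
      _ ≤ M := Finset.single_le_sum (f := fun m => ∑ j, |(m j:ℝ)|)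
            (fun m _ => Finset.sum_nonneg fun j _ => abs_nonneg _) hm
  set B : ℝ≥0∞ := ∑ m ∈ F, b m with hB_def
  have hBt : B ≠ ⊤ := (ENNReal.sum_lt_top.mpr fun m _ => (hbm m).lt_top).ne
  set K : ℝ≥0∞ := 2 * ((125:ℝ≥0∞)^(1/p) * B) with hK_def
  have hKt : K ≠ ⊤ := ENNReal.mul_ne_top (by norm_num)
    (ENNReal.mul_ne_top (ENNReal.rpow_ne_top_of_nonneg h1p_pos.le (by norm_num)) hBt)
  -- first term tends to zero
  have hexp : (0:ℝ) < 3 - 6/q := by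
    have : 6/q < 3 := by rw [div_lt_iff₀ hq0]; linarith
    linarith
  have ht1 : Tendsto (fun R : ℝ => ENNReal.ofReal (R^(6/q-3)) * K) atTop (𝓝 0) := by
    have hreal : Tendsto (fun R:ℝ => R^(6/q-3)) atTop (𝓝 0) := by
      have := tendsto_rpow_neg_atTop hexp
      simpa [show -(3 - 6/q) = 6/q - 3 by ring] using this
    have h2 := ENNReal.tendsto_ofReal (a := 0) hreal
    rw [ENNReal.ofReal_zero] at h2
    simpa using ENNReal.Tendsto.mul_const h2 (Or.inr hKt)
  have hev1 : ∀ᶠ R in atTop, ENNReal.ofReal (R^(6/q-3)) * K ≤ ε/2 :=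
    (ht1.eventually_lt_const (ENNReal.half_pos hε.ne')).mono fun R h => h.le
  filter_upwards [hev1, eventually_ge_atTop (1:ℝ), eventually_ge_atTop (M+1)]
    with R h1 hR1 hRM
  have hR0 : (0:ℝ) < R := lt_of_lt_of_le zero_lt_one hR1
  -- notation
  set X : (Fin 3 → ℤ) → ℝ≥0∞ := fun k => ∑' m, ((Tset R k) ∩ ↑F).indicator b m with hX_def
  set Y : (Fin 3 → ℤ) → ℝ≥0∞ := fun k => ∑' m, ((Tset R k) \ ↑F).indicator b m with hY_def
  set E : ℝ≥0∞ := ENNReal.ofReal ((2*(R+1)+1)^3) ^ (p-1) with hE_def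
  -- splitting the local energy
  have hak : ∀ k, (∫⁻ x in ball (R • zc k) R, (‖u₀ x‖₊ : ℝ≥0∞) ^ 2) ≤ X k + Y k := by
    intro k
    calc (∫⁻ x in ball (R • zc k) R, (‖u₀ x‖₊ : ℝ≥0∞) ^ 2)
        ≤ ∑' m, (Tset R k).indicator b m := lint_ball_le u₀ k
      _ = X k + Y k := by
          rw [hX_def, hY_def, ← ENNReal.tsum_add]
          refine tsum_congr fun m => ?_
          by_cases hFm : m ∈ F <;> by_cases hT : m ∈ Tset R k <;>
            simp [Set.indicator_apply, hFm, hT]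
  have hxy : ∀ (x y : ℝ≥0∞), (x+y)^p ≤ 2^p * (x^p + y^p) := by
    intro x y
    rcases le_total x y with h | h
    · calc (x+y)^p ≤ (2*y)^p := by
            refine ENNReal.rpow_le_rpow ?_ hp0.le
            rw [two_mul]; exact add_le_add_left h y
        _ = 2^p * y^p := ENNReal.mul_rpow_of_nonneg _ _ hp0.le
        _ ≤ 2^p * (x^p + y^p) := mul_le_mul_right le_add_self _
    · calc (x+y)^p ≤ (2*x)^p := by
            refine ENNReal.rpow_le_rpow ?_ hp0.le
            rw [two_mul]; exact add_le_add_right h x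
        _ = 2^p * x^p := ENNReal.mul_rpow_of_nonneg _ _ hp0.le
        _ ≤ 2^p * (x^p + y^p) := mul_le_mul_right le_self_add _
  -- the ℓ^p bound
  have hW : (∑' k : Fin 3 → ℤ, (∫⁻ x in ball (R • zc k) R, (‖u₀ x‖₊ : ℝ≥0∞) ^ 2) ^ p)
      ≤ 2^p * (125 * B^p + E * (125 * τ)) := by
    calc (∑' k : Fin 3 → ℤ, (∫⁻ x in ball (R • zc k) R, (‖u₀ x‖₊ : ℝ≥0∞) ^ 2) ^ p)
        ≤ ∑' k, 2^p * ((X k)^p + (Y k)^p) :=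
          ENNReal.tsum_le_tsum fun k =>
            le_trans (ENNReal.rpow_le_rpow (hak k) hp0.le) (hxy _ _)
      _ = 2^p * ((∑' k, (X k)^p) + ∑' k, (Y k)^p) := by
          rw [ENNReal.tsum_mul_left, ENNReal.tsum_add]
      _ ≤ 2^p * (125 * B^p + E * (125 * τ)) := by
          refine mul_le_mul_right (add_le_add ?_ ?_) _
          · exact main_bound b hp1.le F M hM hR1 hRM
          · exact tail_bound b hp1.le hR1 F
  -- pass to the 1/p power
  have h2pow : ((2:ℝ≥0∞)^p)^(1/p) = 2 := by
    rw [← ENNReal.rpow_mul, mul_one_div_cancel hp0.ne', ENNReal.rpow_one]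
  have hBp : (B^p)^(1/p) = B := by
    rw [← ENNReal.rpow_mul, mul_one_div_cancel hp0.ne', ENNReal.rpow_one]
  have hA0eq : A0q q R u₀
      = (∑' k : Fin 3 → ℤ, (∫⁻ x in ball (R • zc k) R, (‖u₀ x‖₊ : ℝ≥0∞) ^ 2) ^ p)^(1/p) := by
    simp only [A0q]
    congr 1
    rw [hp_def, one_div_div]
  have hA0le : A0q q R u₀ ≤ 2*((125:ℝ≥0∞)^(1/p)*B) + 2*(E^(1/p)*((125:ℝ≥0∞)^(1/p)*τ^(1/p))) := by
    rw [hA0eq]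
    calc (∑' k : Fin 3 → ℤ, (∫⁻ x in ball (R • zc k) R, (‖u₀ x‖₊ : ℝ≥0∞) ^ 2) ^ p)^(1/p)
        ≤ (2^p * (125 * B^p + E * (125 * τ)))^(1/p) := ENNReal.rpow_le_rpow hW h1p_pos.le
      _ = 2 * (125 * B^p + E * (125 * τ))^(1/p) := by
          rw [ENNReal.mul_rpow_of_nonneg _ _ h1p_pos.le, h2pow]
      _ ≤ 2 * ((125 * B^p)^(1/p) + (E * (125 * τ))^(1/p)) :=
          mul_le_mul_right (ENNReal.rpow_add_le_add_rpow _ _ h1p_pos.le h1p_le) _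
      _ = 2*((125:ℝ≥0∞)^(1/p)*B) + 2*(E^(1/p)*((125:ℝ≥0∞)^(1/p)*τ^(1/p))) := by
          rw [ENNReal.mul_rpow_of_nonneg _ _ h1p_pos.le, hBp,
            ENNReal.mul_rpow_of_nonneg _ _ h1p_pos.le,
            ENNReal.mul_rpow_of_nonneg _ _ h1p_pos.le]
          ring
  -- the power of R in front
  have hP : ENNReal.ofReal (R ^ (6/q - 2)) * (ENNReal.ofReal R)⁻¹
      = ENNReal.ofReal (R^(6/q-3)) := by
    rw [← ENNReal.ofReal_inv_of_pos hR0, ← ENNReal.ofReal_mul (by positivity)]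
    congr 1
    rw [show (6/q-3) = (6/q-2) + (-1) by ring, Real.rpow_add hR0, Real.rpow_neg_one]
  -- the crucial uniform bound on the middle factor
  have hPE : ENNReal.ofReal (R^(6/q-3)) * E^(1/p) ≤ 125 := by
    have he_nonneg : (0:ℝ) ≤ (p-1)*(1/p) := mul_nonneg (by linarith) h1p_pos.le
    have he36 : 3*((p-1)*(1/p)) = 3 - 6/q := by
      rw [hp_def]; field_simp; ring
    have he3 : 3*((p-1)*(1/p)) ≤ 3 := by
      rw [he36]; linarith [div_pos (by norm_num : (0:ℝ) < 6) hq0]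
    have hreal : R^(6/q-3) * ((2*(R+1)+1)^3) ^ ((p-1)*(1/p)) ≤ 125 := by
      have hbase : (0:ℝ) < 2*(R+1)+1 := by linarith
      have hd : (((2*(R+1)+1):ℝ)^(3:ℕ)) ^ ((p-1)*(1/p)) = (2*(R+1)+1) ^ ((3:ℝ)*((p-1)*(1/p))) := by
        rw [← Real.rpow_natCast (2*(R+1)+1) 3, ← Real.rpow_mul hbase.le]
        norm_num
      have h5R : (2*(R+1)+1) ^ ((3:ℝ)*((p-1)*(1/p))) ≤ (5*R) ^ ((3:ℝ)*((p-1)*(1/p))) :=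
        Real.rpow_le_rpow hbase.le (by linarith) (by positivity)
      have hmul : ((5:ℝ)*R) ^ ((3:ℝ)*((p-1)*(1/p)))
          = 5 ^ ((3:ℝ)*((p-1)*(1/p))) * R ^ ((3:ℝ)*((p-1)*(1/p))) :=
        Real.mul_rpow (by norm_num) hR0.le
      calc R^(6/q-3) * ((2*(R+1)+1)^3) ^ ((p-1)*(1/p))
          ≤ R^(6/q-3) * (5*R) ^ ((3:ℝ)*((p-1)*(1/p))) := by
            rw [hd]
            exact mul_le_mul_of_nonneg_left h5R (Real.rpow_nonneg hR0.le _)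
        _ = 5 ^ ((3:ℝ)*((p-1)*(1/p))) * (R^(6/q-3) * R ^ ((3:ℝ)*((p-1)*(1/p)))) := by
            rw [hmul]; ring
        _ = 5 ^ ((3:ℝ)*((p-1)*(1/p))) := by
            rw [← Real.rpow_add hR0, he36]
            norm_num
        _ ≤ 5 ^ (3:ℝ) := Real.rpow_le_rpow_of_exponent_le (by norm_num) he3
        _ ≤ 125 := by
            rw [show (3:ℝ) = ((3:ℕ):ℝ) by norm_num, Real.rpow_natCast]
            norm_num
    rw [hE_def, ← ENNReal.rpow_mul,
      ENNReal.ofReal_rpow_of_pos (by positivity),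
      ← ENNReal.ofReal_mul (by positivity)]
    calc ENNReal.ofReal (R^(6/q-3) * ((2*(R+1)+1)^3) ^ ((p-1)*(1/p)))
        ≤ ENNReal.ofReal 125 := ENNReal.ofReal_le_ofReal hreal
      _ = 125 := by simp [ENNReal.ofReal_ofNat]
  -- the tail term is small
  have hτsmall : 125 * (2*((125:ℝ≥0∞)^(1/p)*τ^(1/p))) ≤ ε/2 := by
    have hτp : τ^(1/p) ≤ δ0 := by
      calc τ^(1/p) ≤ (δ0^p)^(1/p) := ENNReal.rpow_le_rpow hτδ h1p_pos.le
        _ = δ0 := by rw [← ENNReal.rpow_mul, mul_one_div_cancel hp0.ne', ENNReal.rpow_one]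
    calc 125 * (2*((125:ℝ≥0∞)^(1/p)*τ^(1/p))) = C * τ^(1/p) := by rw [hC_def]; ring
      _ ≤ C * δ0 := mul_le_mul_right hτp _
      _ ≤ C * ((ε/2)/C) := mul_le_mul_right (min_le_left _ _) _
      _ ≤ ε/2 := ENNReal.mul_div_le
  -- put everything together
  calc ENNReal.ofReal (R ^ (6/q - 2)) * N0q q R u₀
      = ENNReal.ofReal (R^(6/q-3)) * A0q q R u₀ := by
        simp only [N0q]; rw [← mul_assoc, hP]
    _ ≤ ENNReal.ofReal (R^(6/q-3)) *
          (2*((125:ℝ≥0∞)^(1/p)*B) + 2*(E^(1/p)*((125:ℝ≥0∞)^(1/p)*τ^(1/p)))) :=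
        mul_le_mul_right hA0le _
    _ = ENNReal.ofReal (R^(6/q-3)) * K +
          (ENNReal.ofReal (R^(6/q-3)) * E^(1/p)) * (2*((125:ℝ≥0∞)^(1/p)*τ^(1/p))) := by
        rw [hK_def]; ring
    _ ≤ ε/2 + 125 * (2*((125:ℝ≥0∞)^(1/p)*τ^(1/p))) :=
        add_le_add h1 (mul_le_mul_left hPE _)
    _ ≤ ε/2 + ε/2 := add_le_add_right hτsmall _
    _ = ε := ENNReal.add_halves ε

end
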